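/- Let 0 < μ ≤ 2, α < 0, and N a positive integer. Then the mass of the N-tail state, M(ω) = (N (μ+1)^{1/μ}/μ) ω^{1/μ − 1/2} ∫_{|α|/(N√ω)}^{1} (1 − t²)^{1/μ − 1} dt, is differentiable and strictly increasing in ω on the interval (α²/N², ∞); its derivative equals C(N,μ,ω) · [ (1/μ − 1/2) ∫_{|α|/(N√ω)}^{1} (1 − t²)^{1/μ − 1} dt + (|α|/(2N√ω)) (1 − α²/(N²ω))^{1/μ − 1} ], with C(N,μ,ω) = N (μ+1)^{1/μ} μ^{−1} ω^{1/μ − 3/2}, and this expression is strictly positive (Vakhitov–Kolokolov condition). -/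

import Mathlib

/-!
Write `M(ω) = K ω^p I(c/√ω)` with `p = 1/μ − 1/2`, `c = |α|/N` and
`I(x) = ∫_x^1 (1 − t²)^q dt`, `q = 1/μ − 1 > −1`, so that the singularity of the integrand at
`t = 1` is integrable. The product rule and the fundamental theorem of calculus at the moving
lower limit give `M'(ω) = K ω^{p−1} (p I(c/√ω) + (c/(2√ω)) (1 − c²/ω)^q)`. For `μ ≤ 2` the
exponent `p` is nonnegative, so the first term is nonnegative while the boundary term is strictly
positive; the mean value theorem then makes `M` strictly increasing.
-/

open MeasureTheory Set intervalIntegral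

/-- The squared `L²` norm (mass) of the `N`-tail stationary state `Ψ⁰_ω`, as a
function of `ω`:
`M(ω) = (N (μ+1)^{1/μ}/μ) ω^{1/μ − 1/2} ∫_{|α|/(N√ω)}^{1} (1 − t²)^{1/μ − 1} dt`. -/
noncomputable def tailMass (μ α : ℝ) (N : ℕ) (ω : ℝ) : ℝ :=
  ((N : ℝ) * (μ + 1) ^ (1 / μ) / μ) * ω ^ (1 / μ - 1 / 2) *
    ∫ t in (|α| / (N * Real.sqrt ω))..1, (1 - t ^ 2) ^ (1 / μ - 1)

lemma intervalIntegrable_one_sub_sq_rpow {q x : ℝ} (hq : -1 < q) (hx₀ : -1 < x)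
    (hx₁ : x ≤ 1) :
    IntervalIntegrable (fun t => (1 - t ^ 2) ^ q) volume x 1 := by
  have h_sub : IntervalIntegrable (fun t : ℝ => (1 - t) ^ q) volume x 1 := by
    simpa using (intervalIntegrable_rpow' hq (a := 1 - x) (b := 1 - 1)).comp_sub_left 1
  have h_add : ContinuousOn (fun t : ℝ => (1 + t) ^ q) (uIcc x 1) := by
    refine ContinuousOn.rpow_const (by fun_prop) fun t ht => Or.inl ?_
    rw [uIcc_of_le hx₁] at ht
    linarith [ht.1]
  refine (intervalIntegrable_congr fun t ht => ?_).mpr (h_sub.mul_continuousOn h_add)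
  rw [uIoc_of_le hx₁] at ht
  rw [← Real.mul_rpow (by linarith [ht.2]) (by linarith [ht.1])]
  ring_nf

lemma integral_one_sub_sq_rpow_nonneg {q x : ℝ} (hx₀ : -1 ≤ x) (hx₁ : x ≤ 1) :
    0 ≤ ∫ t in x..1, (1 - t ^ 2) ^ q :=
  integral_nonneg hx₁ fun t ht => Real.rpow_nonneg (by nlinarith [ht.1, ht.2]) q

lemma hasDerivAt_div_sqrt (c : ℝ) {ω : ℝ} (hω : 0 < ω) :
    HasDerivAt (fun w => c / √w) (-(c / (2 * √ω)) / ω) ω := by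
  refine ((hasDerivAt_const ω c).div (Real.hasDerivAt_sqrt hω.ne')
    (Real.sqrt_pos.mpr hω).ne').congr_deriv ?_
  rw [Real.sq_sqrt hω.le]
  ring

lemma abs_div_sqrt_lt_one {c ω : ℝ} (hcω : c ^ 2 < ω) : |c / √ω| < 1 := by
  have hω : 0 < √ω := Real.sqrt_pos.mpr ((sq_nonneg c).trans_lt hcω)
  rw [abs_div, abs_of_pos hω, div_lt_one hω]
  exact (Real.lt_sqrt (abs_nonneg c)).mpr (by rwa [sq_abs])

lemma hasDerivAt_rpow_mul_integral_one_sub_sq_rpow {p q c ω : ℝ} (hq : -1 < q)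
    (hcω : c ^ 2 < ω) :
    HasDerivAt (fun w => w ^ p * ∫ t in c / √w..1, (1 - t ^ 2) ^ q)
      (ω ^ (p - 1) * (p * (∫ t in c / √ω..1, (1 - t ^ 2) ^ q)
        + c / (2 * √ω) * (1 - c ^ 2 / ω) ^ q)) ω := by
  have hω : 0 < ω := (sq_nonneg c).trans_lt hcω
  have hx := abs_lt.mp (abs_div_sqrt_lt_one hcω)
  have hx_sq : (c / √ω) ^ 2 = c ^ 2 / ω := by rw [div_pow, Real.sq_sqrt hω.le]
  have h_base : 0 < 1 - c ^ 2 / ω := sub_pos.mpr ((div_lt_one hω).mpr hcω)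
  have h_integral : HasDerivAt (fun u => ∫ t in u..1, (1 - t ^ 2) ^ q)
      (-(1 - c ^ 2 / ω) ^ q) (c / √ω) := by
    have h_meas : Measurable fun t : ℝ => (1 - t ^ 2) ^ q := by fun_prop
    rw [← hx_sq]
    exact integral_hasDerivAt_left (intervalIntegrable_one_sub_sq_rpow hq hx.1 hx.2.le)
      h_meas.stronglyMeasurable.stronglyMeasurableAtFilter
      (ContinuousAt.rpow_const (by fun_prop) (Or.inl (hx_sq ▸ h_base).ne'))
  have h_power : HasDerivAt (fun w => w ^ p) (p * ω ^ (p - 1)) ω :=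
    Real.hasDerivAt_rpow_const (Or.inl hω.ne')
  refine (h_power.mul (h_integral.comp ω (hasDerivAt_div_sqrt c hω))).congr_deriv ?_
  rw [Function.comp_apply, Real.rpow_sub_one hω.ne']
  field_simp

noncomputable def tailMassDeriv (μ α : ℝ) (N : ℕ) (ω : ℝ) : ℝ :=
  ((N : ℝ) * (μ + 1) ^ (1 / μ) / μ) * ω ^ (1 / μ - 3 / 2) *
    ((1 / μ - 1 / 2) *
        (∫ t in (|α| / (N * Real.sqrt ω))..1, (1 - t ^ 2) ^ (1 / μ - 1))
      + |α| / (2 * N * Real.sqrt ω) * (1 - α ^ 2 / ((N : ℝ) ^ 2 * ω)) ^ (1 / μ - 1))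

lemma hasDerivAt_tailMass {μ α ω : ℝ} {N : ℕ} (hμ : 0 < μ) (hω : α ^ 2 / (N : ℝ) ^ 2 < ω) :
    HasDerivAt (tailMass μ α N) (tailMassDeriv μ α N ω) ω := by
  have hq : -1 < 1 / μ - 1 := by linarith [one_div_pos.mpr hμ]
  have hcω : (|α| / N) ^ 2 < ω := by rwa [div_pow, sq_abs]
  have h_fun : tailMass μ α N = fun w => ((N : ℝ) * (μ + 1) ^ (1 / μ) / μ) *
      (w ^ (1 / μ - 1 / 2) * ∫ t in |α| / N / √w..1, (1 - t ^ 2) ^ (1 / μ - 1)) := by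
    funext w
    simp only [tailMass, div_div, mul_assoc]
  rw [h_fun]
  refine ((hasDerivAt_rpow_mul_integral_one_sub_sq_rpow hq hcω).const_mul _).congr_deriv ?_
  have h_exp : 1 / μ - 1 / 2 - 1 = 1 / μ - 3 / 2 := by ring
  have h_boundary : |α| / N / (2 * √ω) = |α| / (2 * N * √ω) := by rw [div_div]; ring_nf
  rw [tailMassDeriv, h_exp, div_div, h_boundary, div_pow, sq_abs, div_div]
  ring

lemma tailMassDeriv_pos {μ α ω : ℝ} {N : ℕ} (hμ : 0 < μ) (hμ2 : μ ≤ 2) (hα : α ≠ 0)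
    (hN : 0 < N) (hω : α ^ 2 / (N : ℝ) ^ 2 < ω) :
    0 < tailMassDeriv μ α N ω := by
  have hN' : (0 : ℝ) < N := Nat.cast_pos.mpr hN
  have hcω : (|α| / N) ^ 2 < ω := by rwa [div_pow, sq_abs]
  have hω₀ : 0 < ω := (sq_nonneg _).trans_lt hcω
  have h_exp : 0 ≤ 1 / μ - 1 / 2 := sub_nonneg.mpr (one_div_le_one_div_of_le hμ hμ2)
  have h_lower := abs_lt.mp (abs_div_sqrt_lt_one hcω)
  rw [div_div] at h_lower
  have h_integral := integral_one_sub_sq_rpow_nonneg (q := 1 / μ - 1) h_lower.1.le h_lower.2.le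
  have h_base : 0 < 1 - α ^ 2 / ((N : ℝ) ^ 2 * ω) := by
    rw [sub_pos, div_lt_one (by positivity)]
    rwa [div_lt_iff₀' (by positivity)] at hω
  have hα' := abs_pos.mpr hα
  unfold tailMassDeriv
  positivity

theorem stmt_10 (μ α : ℝ) (hμ : 0 < μ) (hμ2 : μ ≤ 2) (hα : α < 0)
    (N : ℕ) (hN : 0 < N) :
    -- `M` is differentiable on `(α²/N², ∞)` with the stated derivative, the
    -- derivative is strictly positive (Vakhitov–Kolokolov condition), and `M`
    -- is strictly increasing there
    (∀ ω : ℝ, ω > α ^ 2 / (N : ℝ) ^ 2 →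
      HasDerivAt (tailMass μ α N)
        (((N : ℝ) * (μ + 1) ^ (1 / μ) / μ) * ω ^ (1 / μ - 3 / 2) *
          ((1 / μ - 1 / 2) *
              (∫ t in (|α| / (N * Real.sqrt ω))..1, (1 - t ^ 2) ^ (1 / μ - 1))
            + |α| / (2 * N * Real.sqrt ω) *
              (1 - α ^ 2 / ((N : ℝ) ^ 2 * ω)) ^ (1 / μ - 1))) ω ∧
      0 < ((N : ℝ) * (μ + 1) ^ (1 / μ) / μ) * ω ^ (1 / μ - 3 / 2) *
          ((1 / μ - 1 / 2) *
              (∫ t in (|α| / (N * Real.sqrt ω))..1, (1 - t ^ 2) ^ (1 / μ - 1))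
            + |α| / (2 * N * Real.sqrt ω) *
              (1 - α ^ 2 / ((N : ℝ) ^ 2 * ω)) ^ (1 / μ - 1))) ∧
    StrictMonoOn (tailMass μ α N) (Ioi (α ^ 2 / (N : ℝ) ^ 2)) := by
  have h_deriv : ∀ ω > α ^ 2 / (N : ℝ) ^ 2,
      HasDerivAt (tailMass μ α N) (tailMassDeriv μ α N ω) ω :=
    fun ω hω => hasDerivAt_tailMass hμ hω
  have h_pos : ∀ ω > α ^ 2 / (N : ℝ) ^ 2, 0 < tailMassDeriv μ α N ω :=
    fun ω hω => tailMassDeriv_pos hμ hμ2 hα.ne hN hω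
  refine ⟨fun ω hω => ⟨h_deriv ω hω, h_pos ω hω⟩,
    strictMonoOn_of_hasDerivWithinAt_pos (f' := tailMassDeriv μ α N) (convex_Ioi _)
      (fun ω hω => (h_deriv ω hω).continuousAt.continuousWithinAt) ?_ ?_⟩
  · rw [interior_Ioi]
    exact fun ω hω => (h_deriv ω hω).hasDerivWithinAt
  · rwa [interior_Ioi]
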